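/- Let g be a real Lie algebra and J : g → g an ℝ-linear map with J ∘ J = −id satisfying the abelian condition [Jx, Jy] = [x, y] for all x, y ∈ g. Then every term Z^i(g) of the ascending central series (Z^0(g) = 0, Z^{i+1}(g) = {x ∈ g : [x, g] ⊆ Z^i(g)}) is J-invariant: J(Z^i(g)) = Z^i(g) for all i. In particular the centre of g is J-invariant. -/

import Mathlib

/-! The abelian condition applied to `J y` and `x` gives `⁅y, J x⁆ = -⁅J y, x⁆`, so `J` maps the
normalizer of *any* ideal into itself. Every `Z^(i+1)(g)` is such a normalizer, so `J` maps each
`Z^i(g)` into itself, and `J² = -id` upgrades this inclusion to an equality. -/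

section AbelianComplexStructure

variable {R L : Type*} [CommRing R] [LieRing L] [LieAlgebra R L]
  {J : L →ₗ[R] L} (hJ : ∀ x, J (J x) = -x) (hab : ∀ x y : L, ⁅J x, J y⁆ = ⁅x, y⁆)

include hJ hab in
theorem lie_apply_right_eq_neg_lie_apply_left (x y : L) : ⁅y, J x⁆ = -⁅J y, x⁆ := by
  have h := hab (J y) x
  rw [hJ, neg_lie] at h
  exact neg_eq_iff_eq_neg.mp h

include hJ hab in
theorem apply_mem_normalizer {N : LieIdeal R L} {x : L}
    (hx : x ∈ N.normalizer) : J x ∈ N.normalizer := by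
  rw [LieSubmodule.mem_normalizer] at hx ⊢
  intro y
  rw [lie_apply_right_eq_neg_lie_apply_left hJ hab]
  exact N.neg_mem (hx (J y))

include hJ hab in
theorem apply_mem_ucs {N : LieIdeal R L} (hN : ∀ x ∈ N, J x ∈ N) (k : ℕ) {x : L}
    (hx : x ∈ LieSubmodule.ucs k N) : J x ∈ LieSubmodule.ucs k N := by
  cases k with
  | zero => exact hN x hx
  | succ k =>
    rw [LieSubmodule.ucs_succ] at hx ⊢
    exact apply_mem_normalizer hJ hab hx

end AbelianComplexStructure

theorem Submodule.map_eq_self_of_apply_apply_eq_neg {R M : Type*} [CommRing R] [AddCommGroup M]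
    [Module R M] {J : M →ₗ[R] M} (hJ : ∀ x, J (J x) = -x) {p : Submodule R M}
    (hp : ∀ x ∈ p, J x ∈ p) : p.map J = p := by
  refine le_antisymm (Submodule.map_le_iff_le_comap.mpr hp) fun x hx ↦ ?_
  exact ⟨-J x, p.neg_mem (hp x hx), by rw [map_neg, hJ, neg_neg]⟩

/-- If `J` is an almost complex structure on a real Lie algebra `g` (`J² = -id`)
satisfying the abelian condition `[Jx, Jy] = [x, y]`, then every term
`Z^i(g) = LieSubmodule.ucs i ⊥` of the ascending central series is `J`-invariant:
`J(Z^i(g)) = Z^i(g)`.  (In particular the centre of `g` is `J`-invariant.) -/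
theorem ucs_J_invariant_of_abelian
    {g : Type*} [LieRing g] [LieAlgebra ℝ g]
    (J : g →ₗ[ℝ] g) (hJ : ∀ x, J (J x) = -x)
    (hab : ∀ x y : g, ⁅J x, J y⁆ = ⁅x, y⁆) :
    ∀ i : ℕ,
      Submodule.map J (LieSubmodule.ucs i (⊥ : LieIdeal ℝ g)).toSubmodule =
        (LieSubmodule.ucs i (⊥ : LieIdeal ℝ g)).toSubmodule := by
  have hbot : ∀ x ∈ (⊥ : LieIdeal ℝ g), J x ∈ (⊥ : LieIdeal ℝ g) := by
    simp only [LieSubmodule.mem_bot]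
    rintro x rfl
    exact map_zero J
  exact fun i ↦ Submodule.map_eq_self_of_apply_apply_eq_neg hJ
    fun _ ↦ apply_mem_ucs hJ hab hbot i
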